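/- arXiv:2411.12819 — 2 statements merged into one kernel-verified Lean document; each statement's English description precedes it below -/
import Mathlib

section
/- Let E be a finite set, L ⊆ ℝ^E a linear subspace containing the all-ones vector 𝟙, and A(L) = (u_e^L)_{e∈E} the point configuration in L* given by restricted coordinate functionals. Then the affine span of A(L) in L* is the affine hyperplane {φ ∈ L* : φ(𝟙) = 1}; in particular 0 is not in the affine span of A(L). -/
/-- The affine span of the point configuration `A(L) = (u_e^L)_{e ∈ E}` in `L*` is the
affine hyperplane of functionals taking value `1` on the all-ones vector; in particular
`0` is not in this affine span. -/
theorem affineSpan_point_configuration {E : Type*} [Fintype E]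
    (L : Submodule ℝ (E → ℝ)) (h1 : (fun _ => (1 : ℝ)) ∈ L) :
    (affineSpan ℝ (Set.range fun e : E => (LinearMap.proj e).domRestrict L) :
        Set (Module.Dual ℝ L)) =
      {φ : Module.Dual ℝ L | φ ⟨fun _ => (1 : ℝ), h1⟩ = 1} ∧
    (0 : Module.Dual ℝ L) ∉
      (affineSpan ℝ (Set.range fun e : E => (LinearMap.proj e).domRestrict L) :
        Set (Module.Dual ℝ L)) := by
  classical
  have key : (affineSpan ℝ (Set.range fun e : E => (LinearMap.proj e).domRestrict L) :
        Set (Module.Dual ℝ L)) = {φ : Module.Dual ℝ L | φ ⟨fun _ => (1 : ℝ), h1⟩ = 1} := by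
    ext φ
    constructor
    · intro hφ
      refine affineSpan_induction hφ ?_ ?_
      · rintro x ⟨e, rfl⟩
        simp [LinearMap.domRestrict_apply]
      · intro c p1 p2 p3 h1' h2' h3'
        simp only [Set.mem_setOf_eq] at *
        simp [h1', h2', h3']
    · intro hφ
      simp only [Set.mem_setOf_eq] at hφ
      obtain ⟨g, hg⟩ := LinearMap.exists_extend φ
      set c : E → ℝ := fun e => g (Pi.single e 1) with hc
      have hrep : ∀ x : L, φ x = ∑ e, c e * (x : E → ℝ) e := by
        intro x
        have hx : φ x = g (x : E → ℝ) := by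
          rw [← hg]; rfl
        rw [hx]
        have hdec : (x : E → ℝ) = ∑ e, ((x : E → ℝ) e) • (Pi.single e (1 : ℝ) : E → ℝ) := by
          conv_lhs => rw [← Finset.univ_sum_single (x : E → ℝ)]
          refine Finset.sum_congr rfl fun e _ => ?_
          rw [← Pi.single_smul' e ((x : E → ℝ) e) (1 : ℝ), smul_eq_mul, mul_one]
        conv_lhs => rw [hdec]
        simp [hc, mul_comm]
      have hsum : ∑ e, c e = 1 := by
        have h := hrep ⟨fun _ => (1 : ℝ), h1⟩
        rw [hφ] at h
        simpa using h.symm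
      have hmem := affineCombination_mem_affineSpan (k := ℝ)
        (s := Finset.univ) (w := c) hsum
        (fun e : E => (LinearMap.proj e).domRestrict L)
      have hcomb : Finset.univ.affineCombination ℝ
          (fun e : E => (LinearMap.proj e).domRestrict L) c
          = ∑ e, c e • (LinearMap.proj e).domRestrict L := by
        exact Finset.univ.affineCombination_eq_linear_combination _ _ hsum
      rw [hcomb] at hmem
      have hφeq : φ = ∑ e, c e • (LinearMap.proj e).domRestrict L := by
        ext x
        rw [hrep x]
        simp [LinearMap.domRestrict_apply]
      rw [hφeq]
      exact hmem
  refine ⟨key, ?_⟩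
  rw [key]
  simp
end

section
/- Let S = ℂ[x₁, x₂] and I = ⟨x₁x₂(x₁ − x₂)⟩. If w ∈ ℝ² satisfies w₁ < w₂, then in_w I = ⟨x₁²x₂⟩, and in particular in_w I strictly contains the zero ideal while the ideal I_w generated by I ∩ ℂ[x₁] and I ∩ ℂ[x₂] is zero. -/
noncomputable section
open MvPolynomial

/-- The `w`-weight of a monomial exponent vector `d`. -/
def wtDeg {E : Type*} (w : E → ℝ) (d : E →₀ ℕ) : ℝ := d.sum fun e n => (n : ℝ) * w e

open Classical in
/-- The initial form of `p` with respect to the weight `w`: the sum of the terms of `p`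
of minimal `w`-weight. -/
noncomputable def initialForm {E : Type*} (w : E → ℝ) (p : MvPolynomial E ℂ) :
    MvPolynomial E ℂ :=
  ∑ d ∈ p.support.filter (fun d => ∀ d' ∈ p.support, wtDeg w d ≤ wtDeg w d'),
    monomial d (coeff d p)

/-- The initial ideal of `I` with respect to the weight `w`. -/
noncomputable def initialIdeal {E : Type*} (w : E → ℝ) (I : Ideal (MvPolynomial E ℂ)) :
    Ideal (MvPolynomial E ℂ) :=
  Ideal.span { q | ∃ p ∈ I, p ≠ 0 ∧ q = initialForm w p }

variable {E : Type*} (w : E → ℝ)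

lemma wtDeg_add (d d' : E →₀ ℕ) : wtDeg w (d + d') = wtDeg w d + wtDeg w d' := by
  unfold wtDeg
  rw [Finsupp.sum_add_index']
  · intro a; simp
  · intro a b c; push_cast; ring

lemma wtDeg_single (i : E) (n : ℕ) : wtDeg w (Finsupp.single i n) = n * w i := by
  unfold wtDeg
  rw [Finsupp.sum_single_index]
  simp

open Classical in
lemma coeff_initialForm (p : MvPolynomial E ℂ) (e : E →₀ ℕ) :
    coeff e (initialForm w p) =
      if e ∈ p.support ∧ ∀ d' ∈ p.support, wtDeg w e ≤ wtDeg w d' then coeff e p else 0 := by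
  rw [initialForm, coeff_sum]
  simp only [coeff_monomial]
  rw [Finset.sum_ite_eq']
  simp only [Finset.mem_filter]

lemma initialForm_ne_zero {p : MvPolynomial E ℂ} (hp : p ≠ 0) : initialForm w p ≠ 0 := by
  obtain ⟨d, hd, hmin⟩ := p.support.exists_min_image (wtDeg w) (support_nonempty.mpr hp)
  intro h
  have := coeff_initialForm w p d
  rw [h] at this
  simp only [coeff_zero] at this
  rw [if_pos ⟨hd, hmin⟩] at this
  exact (mem_support_iff.mp hd) this.symm

lemma initialForm_mul {p q : MvPolynomial E ℂ} (hp : p ≠ 0) (hq : q ≠ 0) :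
    initialForm w (p * q) = initialForm w p * initialForm w q := by
  classical
  obtain ⟨dp, hdp, hminp⟩ := p.support.exists_min_image (wtDeg w) (support_nonempty.mpr hp)
  obtain ⟨dq, hdq, hminq⟩ := q.support.exists_min_image (wtDeg w) (support_nonempty.mpr hq)
  set a := wtDeg w dp with ha
  set b := wtDeg w dq with hb
  -- facts about p
  have hap : ∀ e, coeff e p ≠ 0 → a ≤ wtDeg w e := fun e he => hminp e (mem_support_iff.mpr he)
  have haq : ∀ e, coeff e q ≠ 0 → b ≤ wtDeg w e := fun e he => hminq e (mem_support_iff.mpr he)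
  have hinp : ∀ e, wtDeg w e = a → coeff e (initialForm w p) = coeff e p := by
    intro e he
    rw [coeff_initialForm]
    split_ifs with h
    · rfl
    · by_cases hmem : e ∈ p.support
      · exact absurd ⟨hmem, fun d' hd' => he ▸ hminp d' hd'⟩ h
      · exact (notMem_support_iff.mp hmem).symm
  have hinq : ∀ e, wtDeg w e = b → coeff e (initialForm w q) = coeff e q := by
    intro e he
    rw [coeff_initialForm]
    split_ifs with h
    · rfl
    · by_cases hmem : e ∈ q.support
      · exact absurd ⟨hmem, fun d' hd' => he ▸ hminq d' hd'⟩ h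
      · exact (notMem_support_iff.mp hmem).symm
  have hinp0 : ∀ e, wtDeg w e ≠ a → coeff e (initialForm w p) = 0 := by
    intro e he
    rw [coeff_initialForm]
    split_ifs with h
    · exact absurd (le_antisymm (h.2 dp hdp) (hminp e h.1)) he
    · rfl
  have hinq0 : ∀ e, wtDeg w e ≠ b → coeff e (initialForm w q) = 0 := by
    intro e he
    rw [coeff_initialForm]
    split_ifs with h
    · exact absurd (le_antisymm (h.2 dq hdq) (hminq e h.1)) he
    · rfl
  have hcoeff : ∀ e, wtDeg w e = a + b →
      coeff e (p * q) = coeff e (initialForm w p * initialForm w q) := by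
    intro e he
    rw [coeff_mul, coeff_mul]
    refine Finset.sum_congr rfl fun x hx => ?_
    have hxe : x.1 + x.2 = e := Finset.HasAntidiagonal.mem_antidiagonal.mp hx
    have hwte : wtDeg w x.1 + wtDeg w x.2 = a + b := by rw [← wtDeg_add, hxe, he]
    rcases lt_trichotomy (wtDeg w x.1) a with h1 | h1 | h1
    · have hc : coeff x.1 p = 0 := by
        by_contra hc; exact absurd (hap x.1 hc) (not_le.mpr h1)
      rw [hc, hinp0 x.1 (ne_of_lt h1), zero_mul, zero_mul]
    · have h2 : wtDeg w x.2 = b := by linarith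
      rw [hinp x.1 h1, hinq x.2 h2]
    · have h2 : wtDeg w x.2 < b := by linarith
      have hc : coeff x.2 q = 0 := by
        by_contra hc; exact absurd (haq x.2 hc) (not_le.mpr h2)
      rw [hc, hinq0 x.2 (ne_of_lt h2), mul_zero, mul_zero]
  have hwt : ∀ e, coeff e (initialForm w p * initialForm w q) ≠ 0 → wtDeg w e = a + b := by
    intro e he
    rw [coeff_mul] at he
    obtain ⟨x, hx, hne⟩ := Finset.exists_ne_zero_of_sum_ne_zero he
    have hxe : x.1 + x.2 = e := Finset.HasAntidiagonal.mem_antidiagonal.mp hx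
    have h1 : wtDeg w x.1 = a := by
      by_contra h; exact hne (by rw [hinp0 x.1 h, zero_mul])
    have h2 : wtDeg w x.2 = b := by
      by_contra h; exact hne (by rw [hinq0 x.2 h, mul_zero])
    rw [← hxe, wtDeg_add, h1, h2]
  have hminpq : ∀ d ∈ (p * q).support, a + b ≤ wtDeg w d := by
    intro d hd
    rw [mem_support_iff, coeff_mul] at hd
    obtain ⟨x, hx, hne⟩ := Finset.exists_ne_zero_of_sum_ne_zero hd
    have hxe : x.1 + x.2 = d := Finset.HasAntidiagonal.mem_antidiagonal.mp hx
    have h1 := hap x.1 (left_ne_zero_of_mul hne)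
    have h2 := haq x.2 (right_ne_zero_of_mul hne)
    rw [← hxe, wtDeg_add]
    linarith
  obtain ⟨e0, he0⟩ := ne_zero_iff.mp (mul_ne_zero (initialForm_ne_zero w hp) (initialForm_ne_zero w hq))
  have he0wt := hwt e0 he0
  have hpq0 : coeff e0 (p * q) ≠ 0 := by rw [hcoeff e0 he0wt]; exact he0
  ext e
  rw [coeff_initialForm]
  by_cases hwe : wtDeg w e = a + b
  · rw [← hcoeff e hwe]
    split_ifs with h
    · rfl
    · by_cases hmem : e ∈ (p * q).support
      · exact absurd ⟨hmem, fun d' hd' => hwe ▸ hminpq d' hd'⟩ h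
      · exact (notMem_support_iff.mp hmem).symm
  · have : coeff e (initialForm w p * initialForm w q) = 0 := by
      by_contra h; exact hwe (hwt e h)
    rw [this]
    split_ifs with h
    · exfalso
      apply hwe
      refine le_antisymm ?_ (hminpq e h.1)
      rw [← he0wt]
      exact h.2 e0 (mem_support_iff.mpr hpq0)
    · rfl

lemma initialForm_binomial (d1 d2 : E →₀ ℕ) (c1 c2 : ℂ) (hc1 : c1 ≠ 0) (hc2 : c2 ≠ 0)
    (hne : d1 ≠ d2) (hlt : wtDeg w d1 < wtDeg w d2) :
    initialForm w (monomial d1 c1 + monomial d2 c2) = monomial d1 c1 := by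
  classical
  set p := monomial d1 c1 + monomial d2 c2 with hpdef
  have hcoeffp : ∀ e, coeff e p = (if d1 = e then c1 else 0) + (if d2 = e then c2 else 0) := by
    intro e; rw [hpdef, coeff_add, coeff_monomial, coeff_monomial]
  have hsupp : ∀ e ∈ p.support, e = d1 ∨ e = d2 := by
    intro e he
    rw [mem_support_iff, hcoeffp] at he
    by_contra hcon
    push_neg at hcon
    rw [if_neg (fun h => hcon.1 h.symm), if_neg (fun h => hcon.2 h.symm)] at he
    simp at he
  have hd1mem : d1 ∈ p.support := by
    rw [mem_support_iff, hcoeffp, if_pos rfl, if_neg (fun h => hne h.symm), add_zero]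
    exact hc1
  have hmin : ∀ d' ∈ p.support, wtDeg w d1 ≤ wtDeg w d' := by
    intro d' hd'
    rcases hsupp d' hd' with h | h
    · rw [h]
    · rw [h]; exact le_of_lt hlt
  ext e
  rw [coeff_initialForm, coeff_monomial]
  by_cases h1 : d1 = e
  · rw [if_pos h1, ← h1, if_pos ⟨hd1mem, hmin⟩]
    rw [hcoeffp, if_pos rfl, if_neg (fun h => hne h.symm), add_zero]
  · rw [if_neg h1]
    split_ifs with h
    · exfalso
      rcases hsupp e h.1 with h2 | h2
      · exact h1 h2.symm
      · have := h.2 d1 hd1mem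
        rw [h2] at this
        exact absurd this (not_le.mpr hlt)
    · rfl

lemma initialForm_zero (w : Fin 2 → ℝ) : initialForm w (0 : MvPolynomial (Fin 2) ℂ) = 0 := by
  simp [initialForm]

lemma supported_fix {s : Set (Fin 2)} (φ : MvPolynomial (Fin 2) ℂ →ₐ[ℂ] MvPolynomial (Fin 2) ℂ)
    (hφ : ∀ i ∈ s, φ (X i) = X i) {p : MvPolynomial (Fin 2) ℂ} (hp : p ∈ supported ℂ s) :
    φ p = p := by
  refine Algebra.adjoin_induction ?_ ?_ ?_ ?_ hp
  · rintro x ⟨i, hi, rfl⟩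
    exact hφ i hi
  · intro r
    exact φ.commutes r
  · intro x y _ _ hx hy
    rw [map_add, hx, hy]
  · intro x y _ _ hx hy
    rw [map_mul, hx, hy]

/-- For `I = ⟨x₁x₂(x₁ - x₂)⟩` and `w₁ < w₂`, the initial ideal is `⟨x₁²x₂⟩`, which is
nonzero, while the ideal `I_w` generated by `I ∩ ℂ[x₁]` and `I ∩ ℂ[x₂]` is zero. -/
theorem initialIdeal_double_point (w : Fin 2 → ℝ) (hw : w 0 < w 1) :
    initialIdeal w (Ideal.span {(X 0 * X 1 * (X 0 - X 1) : MvPolynomial (Fin 2) ℂ)}) =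
      Ideal.span {(X 0 ^ 2 * X 1 : MvPolynomial (Fin 2) ℂ)} ∧
    initialIdeal w (Ideal.span {(X 0 * X 1 * (X 0 - X 1) : MvPolynomial (Fin 2) ℂ)}) ≠ ⊥ ∧
    Ideal.span
        (((Ideal.span {(X 0 * X 1 * (X 0 - X 1) : MvPolynomial (Fin 2) ℂ)} :
              Ideal (MvPolynomial (Fin 2) ℂ)) : Set (MvPolynomial (Fin 2) ℂ)) ∩
            (supported ℂ ({0} : Set (Fin 2)) : Set (MvPolynomial (Fin 2) ℂ)) ∪
          ((Ideal.span {(X 0 * X 1 * (X 0 - X 1) : MvPolynomial (Fin 2) ℂ)} :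
              Ideal (MvPolynomial (Fin 2) ℂ)) : Set (MvPolynomial (Fin 2) ℂ)) ∩
            (supported ℂ ({1} : Set (Fin 2)) : Set (MvPolynomial (Fin 2) ℂ))) = ⊥ := by
  set f : MvPolynomial (Fin 2) ℂ := X 0 * X 1 * (X 0 - X 1) with hfdef
  set D1 : Fin 2 →₀ ℕ := Finsupp.single 0 2 + Finsupp.single 1 1 with hD1
  set D2 : Fin 2 →₀ ℕ := Finsupp.single 0 1 + Finsupp.single 1 2 with hD2
  have hdne : D1 ≠ D2 := by
    intro h
    have := DFunLike.congr_fun h 0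
    rw [hD1, hD2] at this
    simp [Finsupp.single_apply] at this
  have hfeq : f = monomial D1 1 + monomial D2 (-1) := by
    rw [hfdef, hD1, hD2, mul_sub]
    rw [show (X 0 * X 1 * X 0 : MvPolynomial (Fin 2) ℂ) = X 0 ^ 2 * X 1 ^ 1 by ring]
    rw [show (X 0 * X 1 * X 1 : MvPolynomial (Fin 2) ℂ) = X 0 ^ 1 * X 1 ^ 2 by ring]
    rw [X_pow_eq_monomial, X_pow_eq_monomial, X_pow_eq_monomial, X_pow_eq_monomial,
      monomial_mul, monomial_mul]
    simp [sub_eq_add_neg]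
  have hm : (X 0 ^ 2 * X 1 : MvPolynomial (Fin 2) ℂ) = monomial D1 1 := by
    rw [hD1, show (X 1 : MvPolynomial (Fin 2) ℂ) = X 1 ^ 1 by ring, X_pow_eq_monomial,
      X_pow_eq_monomial, monomial_mul, mul_one]
  have hwlt : wtDeg w D1 < wtDeg w D2 := by
    rw [hD1, hD2, wtDeg_add, wtDeg_add, wtDeg_single, wtDeg_single, wtDeg_single, wtDeg_single]
    push_cast
    linarith
  have hinf : initialForm w f = monomial D1 1 := by
    rw [hfeq]
    exact initialForm_binomial w D1 D2 1 (-1) one_ne_zero (by norm_num) hdne hwlt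
  have hf0 : f ≠ 0 := by
    intro h
    rw [h, initialForm_zero] at hinf
    exact one_ne_zero ((monomial_eq_zero).mp hinf.symm)
  have hpart1 : initialIdeal w (Ideal.span {f}) =
      Ideal.span {(X 0 ^ 2 * X 1 : MvPolynomial (Fin 2) ℂ)} := by
    rw [hm]
    apply le_antisymm
    · rw [initialIdeal, Ideal.span_le]
      rintro q ⟨p, hpI, hp0, rfl⟩
      obtain ⟨g, rfl⟩ := Ideal.mem_span_singleton.mp hpI
      have hg0 : g ≠ 0 := fun h => hp0 (by rw [h, mul_zero])
      rw [initialForm_mul w hf0 hg0, hinf]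
      exact Ideal.mul_mem_right _ _ (Ideal.subset_span rfl)
    · rw [Ideal.span_le, Set.singleton_subset_iff]
      exact Ideal.subset_span ⟨f, Ideal.subset_span rfl, hf0, hinf.symm⟩
  have hXne : (X 0 ^ 2 * X 1 : MvPolynomial (Fin 2) ℂ) ≠ 0 :=
    mul_ne_zero (pow_ne_zero _ (X_ne_zero _)) (X_ne_zero _)
  refine ⟨hpart1, ?_, ?_⟩
  · rw [hpart1, Ne, Ideal.span_singleton_eq_bot]
    exact hXne
  · rw [eq_bot_iff, Ideal.span_le]
    rintro p (⟨hpI, hps⟩ | ⟨hpI, hps⟩)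
    · set φ : MvPolynomial (Fin 2) ℂ →ₐ[ℂ] MvPolynomial (Fin 2) ℂ :=
        aeval (fun i : Fin 2 => if i = 0 then X 0 else 0) with hφdef
      have hφX : ∀ i ∈ ({0} : Set (Fin 2)), φ (X i) = X i := by
        rintro i rfl
        simp [hφdef]
      have hφf : φ f = 0 := by
        rw [hfdef, map_mul, map_mul, hφdef]
        simp
      obtain ⟨g, rfl⟩ := Ideal.mem_span_singleton.mp hpI
      have : φ (f * g) = f * g := supported_fix φ hφX hps
      rw [map_mul, hφf, zero_mul] at this
      simp [← this]
    · set ψ : MvPolynomial (Fin 2) ℂ →ₐ[ℂ] MvPolynomial (Fin 2) ℂ :=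
        aeval (fun i : Fin 2 => if i = 1 then X 1 else 0) with hψdef
      have hψX : ∀ i ∈ ({1} : Set (Fin 2)), ψ (X i) = X i := by
        rintro i rfl
        simp [hψdef]
      have hψf : ψ f = 0 := by
        rw [hfdef, map_mul, map_mul, hψdef]
        simp
      obtain ⟨g, rfl⟩ := Ideal.mem_span_singleton.mp hpI
      have : ψ (f * g) = f * g := supported_fix ψ hψX hps
      rw [map_mul, hψf, zero_mul] at this
      simp [← this]
end
end
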